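/- arXiv:2509.10794 — 8 statements merged into one kernel-verified Lean document; each statement's English description precedes it below -/
import Mathlib

section
/- Let α, β, γ > 0. Let μ₁ be the Gamma distribution on ℝ with shape α and rate γ (density γ^α/Γ(α)·x^(α−1)·exp(−γx) on x > 0) and μ₂ the Gamma distribution with shape β and rate γ. Then the pushforward of the product measure μ₁ ⊗ μ₂ under the map T(x₁, x₂) = (x₁, x₁ + x₂) is the measure on ℝ² having density f(x, y) = γ^(α+β)/(Γ(α)·Γ(β)) · x^(α−1) · (y−x)^(β−1) · exp(−γy) for 0 < x < y (and 0 otherwise) with respect to two-dimensional Lebesgue measure. -/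
open MeasureTheory

/-- The Gamma(a, r) density (shape `a`, rate `r`): `r^a/Γ(a) · x^(a-1) · exp(-r·x)` for `x > 0`,
and `0` otherwise. -/
noncomputable def gammaPdf (a r x : ℝ) : ℝ :=
  if 0 < x then r ^ a / Real.Gamma a * x ^ (a - 1) * Real.exp (-(r * x)) else 0

/-- The McKay bivariate gamma density with parameters `α, β, γ`. -/
noncomputable def mcKayPdf (α β γ x y : ℝ) : ℝ :=
  if 0 < x ∧ x < y then
    γ ^ (α + β) / (Real.Gamma α * Real.Gamma β) * x ^ (α - 1) * (y - x) ^ (β - 1)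
      * Real.exp (-(γ * y))
  else 0

lemma gammaPdf_measurable (a r : ℝ) : Measurable (gammaPdf a r) := by
  unfold gammaPdf
  apply Measurable.ite measurableSet_Ioi
  · fun_prop
  · fun_prop

lemma gammaPdf_mul (α β γ : ℝ) (hγ : 0 < γ) (x y : ℝ) :
    gammaPdf α γ x * gammaPdf β γ (y - x) = mcKayPdf α β γ x y := by
  unfold gammaPdf mcKayPdf
  rcases lt_or_ge 0 x with hx | hx
  · rcases lt_or_ge x y with hy | hy
    · rw [if_pos hx, if_pos (sub_pos.mpr hy), if_pos ⟨hx, hy⟩]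
      rw [Real.rpow_add hγ]
      have he : Real.exp (-(γ * x)) * Real.exp (-(γ * (y - x))) = Real.exp (-(γ * y)) := by
        rw [← Real.exp_add]; ring_nf
      rw [← he]; ring
    · rw [if_neg (not_lt.mpr (sub_nonpos.mpr hy)), mul_zero,
        if_neg (fun h => absurd h.2 (not_lt.mpr hy))]
  · rw [if_neg (not_lt.mpr hx), zero_mul,
      if_neg (fun h => absurd h.1 (not_lt.mpr hx))]

lemma gammaPdf_nonneg (a r : ℝ) (ha : 0 < a) (hr : 0 < r) (x : ℝ) : 0 ≤ gammaPdf a r x := by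
  unfold gammaPdf
  split_ifs with h
  · positivity
  · exact le_refl 0

/-- Mapping a `withDensity` measure through a measurable equivalence. -/
lemma map_withDensity_equiv {α β : Type*} [MeasurableSpace α] [MeasurableSpace β]
    (e : α ≃ᵐ β) (μ : Measure α) (f : α → ENNReal) (hf : Measurable f) :
    Measure.map e (μ.withDensity f) = (Measure.map e μ).withDensity (f ∘ e.symm) := by
  ext s hs
  rw [Measure.map_apply e.measurable hs, withDensity_apply _ (e.measurable hs),
    withDensity_apply _ hs,
    setLIntegral_map hs (hf.comp e.symm.measurable) e.measurable]
  simp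

/-- The pushforward of `Gamma(α,γ) ⊗ Gamma(β,γ)` under `T(x₁,x₂) = (x₁, x₁+x₂)` is the measure
with McKay bivariate gamma density w.r.t. two-dimensional Lebesgue measure. -/
theorem mcKay_eq_map_prod_gamma (α β γ : ℝ) (hα : 0 < α) (hβ : 0 < β) (hγ : 0 < γ)
    (μ₁ μ₂ : Measure ℝ)
    (hμ₁ : μ₁ = volume.withDensity fun x => ENNReal.ofReal (gammaPdf α γ x))
    (hμ₂ : μ₂ = volume.withDensity fun x => ENNReal.ofReal (gammaPdf β γ x)) :
    Measure.map (fun p : ℝ × ℝ => (p.1, p.1 + p.2)) (μ₁.prod μ₂)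
      = (volume : Measure (ℝ × ℝ)).withDensity
          fun p => ENNReal.ofReal (mcKayPdf α β γ p.1 p.2) := by
  subst hμ₁ hμ₂
  have hf : Measurable fun x => ENNReal.ofReal (gammaPdf α γ x) :=
    (gammaPdf_measurable α γ).ennreal_ofReal
  have hg : Measurable fun x => ENNReal.ofReal (gammaPdf β γ x) :=
    (gammaPdf_measurable β γ).ennreal_ofReal
  have hprod : (volume.withDensity fun x => ENNReal.ofReal (gammaPdf α γ x)).prod
      (volume.withDensity fun x => ENNReal.ofReal (gammaPdf β γ x))
      = (volume : Measure (ℝ × ℝ)).withDensity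
          (fun p => ENNReal.ofReal (gammaPdf α γ p.1) * ENNReal.ofReal (gammaPdf β γ p.2)) := by
    refine Measure.prod_eq fun s t hs ht => ?_
    rw [withDensity_apply _ (hs.prod ht), Measure.volume_eq_prod, ← Measure.prod_restrict,
      lintegral_prod_mul hf.aemeasurable hg.aemeasurable,
      withDensity_apply _ hs, withDensity_apply _ ht]
  rw [hprod]
  have heq : (fun p : ℝ × ℝ => (p.1, p.1 + p.2))
      = (MeasurableEquiv.shearAddRight ℝ : ℝ × ℝ → ℝ × ℝ) := rfl
  rw [heq, map_withDensity_equiv _ _ (fun p : ℝ × ℝ => ENNReal.ofReal (gammaPdf α γ p.1) * ENNReal.ofReal (gammaPdf β γ p.2)) ((hf.comp measurable_fst).mul (hg.comp measurable_snd))]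
  have hmp : Measure.map (MeasurableEquiv.shearAddRight ℝ) (volume : Measure (ℝ × ℝ))
      = volume := by
    rw [Measure.volume_eq_prod]
    exact (measurePreserving_prod_add (volume : Measure ℝ) volume).map_eq
  rw [hmp]
  congr 1
  funext p
  have : (MeasurableEquiv.shearAddRight ℝ).symm p = (p.1, -p.1 + p.2) := rfl
  simp only [Function.comp_apply, this]
  rw [← ENNReal.ofReal_mul (gammaPdf_nonneg α γ hα hγ p.1)]
  congr 1
  rw [show -p.1 + p.2 = p.2 - p.1 by ring]
  exact gammaPdf_mul α β γ hγ p.1 p.2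
end

section
/- Let α, β, γ > 0 and let f be the McKay bivariate gamma density with parameters α, β, γ. Then for every y > 0, ∫_ℝ f(x, y) dx = γ^(α+β)/Γ(α+β) · y^(α+β−1) · exp(−γy); that is, the second marginal density of f is the Gamma(α+β, γ) density. -/
open MeasureTheory

lemma real_beta_scaled (α β : ℝ) (hα : 0 < α) (hβ : 0 < β) {y : ℝ} (hy : 0 < y) :
    ∫ x in (0:ℝ)..y, x ^ (α - 1) * (y - x) ^ (β - 1)
      = Real.Gamma α * Real.Gamma β / Real.Gamma (α + β) * y ^ (α + β - 1) := by
  have hαc : 0 < Complex.re (α : ℂ) := by simpa using hα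
  have hβc : 0 < Complex.re (β : ℂ) := by simpa using hβ
  have hbeta : Complex.betaIntegral α β
      = (Real.Gamma α * Real.Gamma β / Real.Gamma (α + β) : ℝ) := by
    have h := Complex.Gamma_mul_Gamma_eq_betaIntegral hαc hβc
    have hne : Complex.Gamma ((α : ℂ) + β) ≠ 0 := by
      rw [(by push_cast; ring : (α : ℂ) + β = ((α + β : ℝ) : ℂ)), Complex.Gamma_ofReal]
      exact_mod_cast (Real.Gamma_pos_of_pos (by positivity)).ne'
    rw [(by push_cast; ring : (α : ℂ) + β = ((α + β : ℝ) : ℂ))] at h hne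
    simp only [Complex.Gamma_ofReal] at h hne
    rw [Complex.ofReal_div, Complex.ofReal_mul, eq_div_iff hne]
    linear_combination -h
  have h1 : (∫ x in (0:ℝ)..y, ((x ^ (α - 1) * (y - x) ^ (β - 1) : ℝ) : ℂ))
      = (y : ℂ) ^ ((α : ℂ) + β - 1) * Complex.betaIntegral α β := by
    rw [← Complex.betaIntegral_scaled (α : ℂ) (β : ℂ) hy,
      intervalIntegral.integral_of_le hy.le, intervalIntegral.integral_of_le hy.le]
    refine setIntegral_congr_fun measurableSet_Ioc fun x hx => ?_
    rw [Complex.ofReal_mul, Complex.ofReal_cpow hx.1.le,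
      Complex.ofReal_cpow (sub_nonneg.mpr hx.2)]
    push_cast
    ring
  rw [intervalIntegral.integral_ofReal] at h1
  have h2 : ((y : ℂ) ^ ((α : ℂ) + β - 1)) = ((y ^ (α + β - 1) : ℝ) : ℂ) := by
    rw [Complex.ofReal_cpow hy.le]
    push_cast
    ring_nf
  rw [h2, hbeta, ← Complex.ofReal_mul] at h1
  have := Complex.ofReal_injective h1
  rw [this]
  ring

/-- For every `y > 0`, `∫ f(x, y) dx = γ^(α+β)/Γ(α+β) · y^(α+β-1) · exp(-γy)`: the second
marginal of the McKay bivariate gamma density is the Gamma(α+β, γ) density. -/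
theorem mcKayPdf_second_marginal (α β γ : ℝ) (hα : 0 < α) (hβ : 0 < β) (hγ : 0 < γ)
    (y : ℝ) (hy : 0 < y) :
    ∫ x : ℝ, mcKayPdf α β γ x y
      = γ ^ (α + β) / Real.Gamma (α + β) * y ^ (α + β - 1) * Real.exp (-(γ * y)) := by
  have hind : (fun x => mcKayPdf α β γ x y)
      = Set.indicator (Set.Ioo 0 y)
          (fun x => γ ^ (α + β) / (Real.Gamma α * Real.Gamma β) * x ^ (α - 1)
            * (y - x) ^ (β - 1) * Real.exp (-(γ * y))) := by
    funext x
    simp only [mcKayPdf, Set.indicator, Set.mem_Ioo]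
  rw [hind, integral_indicator measurableSet_Ioo, ← integral_Ioc_eq_integral_Ioo,
    ← intervalIntegral.integral_of_le hy.le]
  have : ∀ x : ℝ, γ ^ (α + β) / (Real.Gamma α * Real.Gamma β) * x ^ (α - 1)
      * (y - x) ^ (β - 1) * Real.exp (-(γ * y))
      = (γ ^ (α + β) / (Real.Gamma α * Real.Gamma β) * Real.exp (-(γ * y)))
        * (x ^ (α - 1) * (y - x) ^ (β - 1)) := fun x => by ring
  simp_rw [this]
  rw [intervalIntegral.integral_const_mul, real_beta_scaled α β hα hβ hy]
  have h1 := (Real.Gamma_pos_of_pos hα).ne'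
  have h2 := (Real.Gamma_pos_of_pos hβ).ne'
  have h3 := (Real.Gamma_pos_of_pos (show (0:ℝ) < α + β by positivity)).ne'
  field_simp
end

section
/- Let α, β, γ > 0 and let f be the McKay bivariate gamma density with parameters α, β, γ. Then ∫_{ℝ²} y · f(x, y) d(x, y) = (α + β)/γ. -/
open MeasureTheory


lemma aux_integrable {s b : ℝ} (hs : -1 < s) (hb : 0 < b) :
    Integrable (fun x : ℝ => if 0 < x then x ^ s * Real.exp (-(b * x)) else 0) := by
  have h := integrableOn_rpow_mul_exp_neg_mul_rpow hs zero_lt_one hb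
  simp only [Real.rpow_one, neg_mul] at h
  have : (fun x : ℝ => if 0 < x then x ^ s * Real.exp (-(b * x)) else 0)
      = Set.indicator (Set.Ioi 0) (fun x : ℝ => x ^ s * Real.exp (-(b * x))) := by
    funext x; by_cases hx : 0 < x <;> simp [Set.indicator, hx]
  rw [this, integrable_indicator_iff measurableSet_Ioi]
  exact h

lemma aux_integral {s b : ℝ} (hs : 0 < s) (hb : 0 < b) :
    ∫ x : ℝ, (if 0 < x then x ^ (s - 1) * Real.exp (-(b * x)) else 0)
      = (1 / b) ^ s * Real.Gamma s := by
  have : (fun x : ℝ => if 0 < x then x ^ (s-1) * Real.exp (-(b * x)) else 0)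
      = Set.indicator (Set.Ioi 0) (fun x : ℝ => x ^ (s-1) * Real.exp (-(b * x))) := by
    funext x; by_cases hx : 0 < x <;> simp [Set.indicator, hx]
  rw [this, integral_indicator measurableSet_Ioi]
  exact Real.integral_rpow_mul_exp_neg_mul_Ioi hs hb


/-- The mean of `Y` under the McKay bivariate gamma law: `∫ y·f(x,y) d(x,y) = (α+β)/γ`. -/
theorem mcKay_integral_y (α β γ : ℝ) (hα : 0 < α) (hβ : 0 < β) (hγ : 0 < γ) :
    ∫ p : ℝ × ℝ, p.2 * mcKayPdf α β γ p.1 p.2 = (α + β) / γ := by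
  set C : ℝ := γ ^ (α + β) / (Real.Gamma α * Real.Gamma β) with hC
  set g1 : ℝ → ℝ := fun x => if 0 < x then x ^ α * Real.exp (-(γ * x)) else 0 with hg1
  set g2 : ℝ → ℝ := fun z => if 0 < z then z ^ (β - 1) * Real.exp (-(γ * z)) else 0 with hg2
  set g3 : ℝ → ℝ := fun x => if 0 < x then x ^ (α - 1) * Real.exp (-(γ * x)) else 0 with hg3
  set g4 : ℝ → ℝ := fun z => if 0 < z then z ^ β * Real.exp (-(γ * z)) else 0 with hg4
  have key : ∀ x z : ℝ, (x + z) * mcKayPdf α β γ x (x + z)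
      = C * (g1 x * g2 z + g3 x * g4 z) := by
    intro x z
    by_cases hx : 0 < x
    · by_cases hz : 0 < z
      · have hcond : 0 < x ∧ x < x + z := ⟨hx, by linarith⟩
        rw [show mcKayPdf α β γ x (x + z) = C * x ^ (α - 1) * z ^ (β - 1)
            * Real.exp (-(γ * (x + z))) from by
          rw [mcKayPdf, if_pos hcond, add_sub_cancel_left]]
        simp only [hg1, hg2, hg3, hg4]
        rw [if_pos hx, if_pos hz, if_pos hx, if_pos hz]
        have hxα : x ^ α = x ^ (α - 1) * x := by
          rw [← Real.rpow_add_one hx.ne' (α - 1)]; ring_nf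
        have hzβ : z ^ β = z ^ (β - 1) * z := by
          rw [← Real.rpow_add_one hz.ne' (β - 1)]; ring_nf
        have hexp : Real.exp (-(γ * (x + z))) = Real.exp (-(γ * x)) * Real.exp (-(γ * z)) := by
          rw [← Real.exp_add]; ring_nf
        rw [hexp, hxα, hzβ]; ring
      · have hcond : ¬ (0 < x ∧ x < x + z) := by
          rintro ⟨-, h⟩; exact hz (by linarith)
        simp [mcKayPdf, hcond, hg1, hg2, hg3, hg4, hz]
    · have hcond : ¬ (0 < x ∧ x < x + z) := fun h => hx h.1
      simp [mcKayPdf, hcond, hg1, hg2, hg3, hg4, hx]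
  have h1 : Integrable g1 := aux_integrable (by linarith) hγ
  have h2 : Integrable g2 := aux_integrable (by linarith) hγ
  have h3 : Integrable g3 := aux_integrable (by linarith) hγ
  have h4 : Integrable g4 := aux_integrable (by linarith) hγ
  have step1 : ∫ p : ℝ × ℝ, p.2 * mcKayPdf α β γ p.1 p.2
      = ∫ p : ℝ × ℝ, C * (g1 p.1 * g2 p.2 + g3 p.1 * g4 p.2)
        ∂((volume : Measure ℝ).prod volume) := by
    rw [show (volume : Measure (ℝ × ℝ)) = (volume : Measure ℝ).prod volume from
      MeasureTheory.Measure.volume_eq_prod ℝ ℝ, ← (measurePreserving_prod_add (volume : Measure ℝ) volume).integral_comp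
        (MeasurableEquiv.shearAddRight ℝ).measurableEmbedding
        (fun p : ℝ × ℝ => p.2 * mcKayPdf α β γ p.1 p.2)]
    refine integral_congr_ae (Filter.Eventually.of_forall fun p => ?_)
    exact key p.1 p.2
  rw [step1]
  rw [integral_const_mul, integral_add (h1.mul_prod h2) (h3.mul_prod h4),
    integral_prod_mul, integral_prod_mul]
  have e1 : ∫ x, g1 x = (1 / γ) ^ (α + 1) * Real.Gamma (α + 1) := by
    have h := aux_integral (s := α + 1) (b := γ) (by linarith) hγ
    simp only [add_sub_cancel_right] at h
    rw [hg1]; exact h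
  have e2 : ∫ z, g2 z = (1 / γ) ^ β * Real.Gamma β := aux_integral hβ hγ
  have e3 : ∫ x, g3 x = (1 / γ) ^ α * Real.Gamma α := aux_integral hα hγ
  have e4 : ∫ z, g4 z = (1 / γ) ^ (β + 1) * Real.Gamma (β + 1) := by
    have h := aux_integral (s := β + 1) (b := γ) (by linarith) hγ
    simp only [add_sub_cancel_right] at h
    rw [hg4]; exact h
  rw [e1, e2, e3, e4, Real.Gamma_add_one hα.ne', Real.Gamma_add_one hβ.ne']
  have hγne : γ ≠ 0 := hγ.ne'
  have hΓα : Real.Gamma α ≠ 0 := (Real.Gamma_pos_of_pos hα).ne'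
  have hΓβ : Real.Gamma β ≠ 0 := (Real.Gamma_pos_of_pos hβ).ne'
  have hpow : ∀ t : ℝ, (1 / γ) ^ t = (γ ^ t)⁻¹ := fun t => by
    rw [one_div, Real.inv_rpow hγ.le]
  rw [hC, hpow, hpow, hpow, hpow,
    Real.rpow_add_one hγne, Real.rpow_add_one hγne,
    show γ ^ (α + β) = γ ^ α * γ ^ β from Real.rpow_add hγ α β]
  have hγα : γ ^ α ≠ 0 := (Real.rpow_pos_of_pos hγ α).ne'
  have hγβ : γ ^ β ≠ 0 := (Real.rpow_pos_of_pos hγ β).ne'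
  field_simp
end

section
/- Let α, β, γ > 0 and let f be the McKay bivariate gamma density with parameters α, β, γ. Then ∫_{ℝ²} log(x) · f(x, y) d(x, y) = ψ(α) − log γ, where ψ(t) denotes the derivative at t of the function s ↦ log Γ(s). -/
open MeasureTheory Set Filter Asymptotics Topology

lemma integrableOn_log_gammaIntegrand {α : ℝ} (hα : 0 < α) :
    IntegrableOn (fun t : ℝ => t ^ (α - 1) * (Real.log t * Real.exp (-t))) (Ioi 0) := by
  have hfc : LocallyIntegrableOn (fun x : ℝ => ((Real.exp (-x) : ℝ) : ℂ)) (Ioi 0) := by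
    refine (Continuous.continuousOn ?_).locallyIntegrableOn measurableSet_Ioi
    exact Complex.continuous_ofReal.comp (Real.continuous_exp.comp continuous_neg)
  have hf_top : (fun x : ℝ => ((Real.exp (-x) : ℝ) : ℂ)) =O[atTop]
      (fun x : ℝ => x ^ (-(α + 1))) := by
    rw [← isBigO_norm_left]
    simp_rw [Complex.norm_real, isBigO_norm_left]
    simpa only [neg_one_mul] using (isLittleO_exp_neg_mul_rpow_atTop zero_lt_one _).isBigO
  have hf_bot : (fun x : ℝ => ((Real.exp (-x) : ℝ) : ℂ)) =O[𝓝[>] 0]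
      (fun x : ℝ => x ^ (-(0 : ℝ))) := by
    simp_rw [neg_zero, Real.rpow_zero]
    refine isBigO_const_of_tendsto (?_ : Tendsto _ _ (𝓝 (1 : ℂ))) one_ne_zero
    have h1 : ((Real.exp (-0) : ℝ) : ℂ) = 1 := by simp
    rw [← h1]
    exact (Complex.continuous_ofReal.comp
      (Real.continuous_exp.comp continuous_neg)).continuousWithinAt
  have h := (mellin_hasDerivAt_of_isBigO_rpow (s := (α : ℂ)) hfc hf_top
    (by simp) hf_bot (by simpa using hα)).1
  have h2 : IntegrableOn
      (fun t : ℝ => (t : ℂ) ^ ((α : ℂ) - 1) • (Real.log t • ((Real.exp (-t) : ℝ) : ℂ)))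
      (Ioi 0) := h
  refine (h2.re).congr ?_
  refine (ae_restrict_iff' measurableSet_Ioi).mpr (ae_of_all _ fun t ht => ?_)
  have ht' : (0 : ℝ) < t := ht
  have : ((t : ℂ) ^ ((α : ℂ) - 1) • (Real.log t • ((Real.exp (-t) : ℝ) : ℂ)))
      = (((t ^ (α - 1) * (Real.log t * Real.exp (-t)) : ℝ)) : ℂ) := by
    rw [smul_eq_mul, Complex.real_smul,
      show ((α : ℂ) - 1) = ((α - 1 : ℝ) : ℂ) by push_cast; ring,
      ← Complex.ofReal_cpow ht'.le]
    push_cast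
    ring
  simp only [RCLike.re_to_complex]
  rw [this, Complex.ofReal_re]

lemma hasDerivAt_realGamma {α : ℝ} (hα : 0 < α) :
    HasDerivAt Real.Gamma
      (∫ t in Ioi (0:ℝ), t ^ (α - 1) * (Real.log t * Real.exp (-t))) α := by
  have hc := Complex.hasDerivAt_GammaIntegral (s := (α : ℂ)) (by simpa using hα)
  have hmem : {z : ℂ | 0 < z.re} ∈ 𝓝 (α : ℂ) :=
    (isOpen_lt continuous_const Complex.continuous_re).mem_nhds (by simpa using hα)
  have heq : Complex.Gamma =ᶠ[𝓝 (α : ℂ)] Complex.GammaIntegral :=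
    Filter.eventuallyEq_of_mem hmem fun z hz => Complex.Gamma_eq_integral hz
  have hg := hc.congr_of_eventuallyEq heq
  have hD : (∫ t : ℝ in Ioi 0, (t : ℂ) ^ ((α : ℂ) - 1)
        * (((Real.log t : ℝ) : ℂ) * ((Real.exp (-t) : ℝ) : ℂ)))
      = (((∫ t in Ioi (0:ℝ), t ^ (α - 1) * (Real.log t * Real.exp (-t))) : ℝ) : ℂ) := by
    refine Eq.trans (setIntegral_congr_fun measurableSet_Ioi fun t ht => ?_) integral_ofReal
    have ht' : (0 : ℝ) < t := ht
    show _ = (((t ^ (α - 1) * (Real.log t * Real.exp (-t)) : ℝ)) : ℂ)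
    rw [show ((α : ℂ) - 1) = ((α - 1 : ℝ) : ℂ) by push_cast; ring,
      ← Complex.ofReal_cpow ht'.le]
    push_cast
    ring
  rw [hD] at hg
  have hre := hg.real_of_complex
  exact (show Real.Gamma = fun x : ℝ => (Complex.Gamma x).re from funext fun x => rfl) ▸ hre

lemma integrableOn_A {α γ : ℝ} (hα : 0 < α) (hγ : 0 < γ) :
    IntegrableOn (fun x : ℝ => x ^ (α - 1) * Real.exp (-(γ * x))) (Ioi 0) := by
  have h1 : IntegrableOn (fun x : ℝ => Real.exp (-(γ * x)) * (γ * x) ^ (α - 1)) (Ioi 0) := by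
    have := (integrableOn_Ioi_comp_mul_left_iff
      (fun u : ℝ => Real.exp (-u) * u ^ (α - 1)) 0 hγ).mpr
      (by simpa using Real.GammaIntegral_convergent hα)
    simpa using this
  have h2 := h1.const_mul ((γ ^ (α - 1))⁻¹)
  refine IntegrableOn.congr_fun h2 (fun x hx => ?_) measurableSet_Ioi
  have hx' : (0 : ℝ) < x := hx
  rw [Real.mul_rpow hγ.le hx'.le]
  field_simp [(Real.rpow_pos_of_pos hγ (α - 1)).ne']

lemma integrableOn_B {α γ : ℝ} (hα : 0 < α) (hγ : 0 < γ) :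
    IntegrableOn (fun x : ℝ => Real.log x * (x ^ (α - 1) * Real.exp (-(γ * x)))) (Ioi 0) := by
  have h2 : IntegrableOn
      (fun x : ℝ => (γ * x) ^ (α - 1) * (Real.log (γ * x) * Real.exp (-(γ * x)))) (Ioi 0) := by
    have := (integrableOn_Ioi_comp_mul_left_iff
      (fun u : ℝ => u ^ (α - 1) * (Real.log u * Real.exp (-u))) 0 hγ).mpr
      (by simpa using integrableOn_log_gammaIntegrand hα)
    simpa using this
  have h3 := (h2.const_mul ((γ ^ (α - 1))⁻¹)).sub
    ((integrableOn_A hα hγ).const_mul (Real.log γ))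
  refine IntegrableOn.congr_fun h3 (fun x hx => ?_) measurableSet_Ioi
  have hx' : (0 : ℝ) < x := hx
  simp only [Pi.sub_apply]
  rw [Real.mul_rpow hγ.le hx'.le, Real.log_mul hγ.ne' hx'.ne']
  field_simp [(Real.rpow_pos_of_pos hγ (α - 1)).ne']
  ring

lemma integral_log_rpow_exp {α γ : ℝ} (hα : 0 < α) (hγ : 0 < γ) :
    ∫ x in Ioi (0:ℝ), Real.log x * (x ^ (α - 1) * Real.exp (-(γ * x)))
      = (deriv Real.Gamma α - Real.log γ * Real.Gamma α) / γ ^ α := by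
  have hG' : deriv Real.Gamma α
      = ∫ t in Ioi (0:ℝ), t ^ (α - 1) * (Real.log t * Real.exp (-t)) :=
    (hasDerivAt_realGamma hα).deriv
  have hsub := integral_comp_mul_left_Ioi
    (fun u : ℝ => u ^ (α - 1) * (Real.log u * Real.exp (-u))) 0 hγ
  rw [mul_zero] at hsub
  -- rewrite the substituted integrand
  have hsplit : ∀ x ∈ Ioi (0:ℝ),
      (γ * x) ^ (α - 1) * (Real.log (γ * x) * Real.exp (-(γ * x)))
        = γ ^ (α - 1) * (Real.log γ * (x ^ (α - 1) * Real.exp (-(γ * x))))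
          + γ ^ (α - 1) * (Real.log x * (x ^ (α - 1) * Real.exp (-(γ * x)))) := by
    intro x hx
    have hx' : (0 : ℝ) < x := hx
    rw [Real.mul_rpow hγ.le hx'.le, Real.log_mul hγ.ne' hx'.ne']
    ring
  have hA := integrableOn_A hα hγ
  have hB := integrableOn_B hα hγ
  have heq : ∫ x in Ioi (0:ℝ), (γ * x) ^ (α - 1) * (Real.log (γ * x) * Real.exp (-(γ * x)))
      = γ ^ (α - 1) * (Real.log γ * ∫ x in Ioi (0:ℝ), x ^ (α - 1) * Real.exp (-(γ * x)))
        + γ ^ (α - 1) * ∫ x in Ioi (0:ℝ), Real.log x * (x ^ (α - 1) * Real.exp (-(γ * x))) := by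
    rw [setIntegral_congr_fun measurableSet_Ioi hsplit,
      integral_add ((hA.const_mul _).const_mul _) (hB.const_mul _),
      integral_const_mul, integral_const_mul, integral_const_mul]
  rw [Real.integral_rpow_mul_exp_neg_mul_Ioi hα hγ] at heq
  rw [hsub, ← hG'] at heq
  have hγα : (0:ℝ) < γ ^ α := Real.rpow_pos_of_pos hγ α
  have hγα1 : (0:ℝ) < γ ^ (α - 1) := Real.rpow_pos_of_pos hγ (α - 1)
  have hpow : γ ^ (α - 1) * γ = γ ^ α := by
    have h := Real.rpow_add hγ (α - 1) 1
    rw [Real.rpow_one] at h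
    rw [← h]
    norm_num
  have hdiv : ((1:ℝ) / γ) ^ α = (γ ^ α)⁻¹ := by
    rw [one_div, Real.inv_rpow hγ.le]
  set I := ∫ x in Ioi (0:ℝ), Real.log x * (x ^ (α - 1) * Real.exp (-(γ * x))) with hI
  rw [smul_eq_mul, hdiv] at heq
  rw [eq_div_iff hγα.ne']
  have hinv : γ * γ⁻¹ = 1 := mul_inv_cancel₀ hγ.ne'
  have hinv2 : γ ^ α * (γ ^ α)⁻¹ = 1 := mul_inv_cancel₀ hγα.ne'
  linear_combination (-γ) * heq + (deriv Real.Gamma α) * hinv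
    + (-I - Real.log γ * Real.Gamma α * (γ ^ α)⁻¹) * hpow
    + (-(Real.log γ * Real.Gamma α)) * hinv2

/-- The mean of `log X` under the McKay bivariate gamma law: `∫ log(x)·f(x,y) d(x,y) = ψ(α) - log γ`,
where `ψ` is the derivative of `log ∘ Γ`. -/
theorem mcKay_integral_log_x (α β γ : ℝ) (hα : 0 < α) (hβ : 0 < β) (hγ : 0 < γ) :
    ∫ p : ℝ × ℝ, Real.log p.1 * mcKayPdf α β γ p.1 p.2
      = deriv (fun s : ℝ => Real.log (Real.Gamma s)) α - Real.log γ := by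
  have hΓα : 0 < Real.Gamma α := Real.Gamma_pos_of_pos hα
  have hΓβ : 0 < Real.Gamma β := Real.Gamma_pos_of_pos hβ
  have hγα : (0:ℝ) < γ ^ α := Real.rpow_pos_of_pos hγ α
  have hγβ : (0:ℝ) < γ ^ β := Real.rpow_pos_of_pos hγ β
  have hd := hasDerivAt_realGamma hα
  have hlog : deriv (fun s : ℝ => Real.log (Real.Gamma s)) α
      = deriv Real.Gamma α / Real.Gamma α := by
    rw [(hd.log hΓα.ne').deriv, hd.deriv]
  set C : ℝ := γ ^ (α + β) / (Real.Gamma α * Real.Gamma β) with hC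
  set G : ℝ → ℝ := fun x => if 0 < x then Real.log x * (x ^ (α - 1) * Real.exp (-(γ * x))) else 0
    with hG
  set H : ℝ → ℝ := fun u => if 0 < u then u ^ (β - 1) * Real.exp (-(γ * u)) else 0 with hH
  have hmp : MeasurePreserving (fun z : ℝ × ℝ => (z.1, z.1 + z.2))
      ((volume : Measure ℝ).prod volume) ((volume : Measure ℝ).prod volume) :=
    measurePreserving_prod_add volume volume
  have hemb : MeasurableEmbedding (fun z : ℝ × ℝ => (z.1, z.1 + z.2)) :=
    (MeasurableEquiv.shearAddRight ℝ).measurableEmbedding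
  have step1 : ∫ p : ℝ × ℝ, Real.log p.1 * mcKayPdf α β γ p.1 p.2
      = ∫ z : ℝ × ℝ, Real.log z.1 * mcKayPdf α β γ z.1 (z.1 + z.2)
          ∂((volume : Measure ℝ).prod volume) := by
    rw [show (volume : Measure (ℝ × ℝ)) = (volume : Measure ℝ).prod volume from Measure.volume_eq_prod ℝ ℝ]
    exact (hmp.integral_comp hemb (fun p : ℝ × ℝ => Real.log p.1 * mcKayPdf α β γ p.1 p.2)).symm
  have hfun : ∀ z : ℝ × ℝ,
      Real.log z.1 * mcKayPdf α β γ z.1 (z.1 + z.2) = C * (G z.1 * H z.2) := by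
    rintro ⟨x, u⟩
    simp only [mcKayPdf, hG, hH, lt_add_iff_pos_right]
    by_cases hx : 0 < x <;> by_cases hu : 0 < u <;> simp [hx, hu]
    rw [show -(γ * (x + u)) = -(γ * x) + -(γ * u) by ring, Real.exp_add, hC]
    ring
  have step2 : (∫ z : ℝ × ℝ, Real.log z.1 * mcKayPdf α β γ z.1 (z.1 + z.2)
        ∂((volume : Measure ℝ).prod volume))
      = C * ((∫ x, G x) * (∫ u, H u)) := by
    simp_rw [hfun]
    rw [integral_const_mul, integral_prod_mul]
  have hGind : (∫ x, G x) = ∫ x in Ioi (0:ℝ),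
      Real.log x * (x ^ (α - 1) * Real.exp (-(γ * x))) := by
    have h : G = (Ioi (0:ℝ)).indicator
        (fun x => Real.log x * (x ^ (α - 1) * Real.exp (-(γ * x)))) := by
      ext x
      simp [hG, Set.indicator_apply, Set.mem_Ioi]
    rw [h, integral_indicator measurableSet_Ioi]
  have hHind : (∫ u, H u) = ∫ u in Ioi (0:ℝ), u ^ (β - 1) * Real.exp (-(γ * u)) := by
    have h : H = (Ioi (0:ℝ)).indicator
        (fun u => u ^ (β - 1) * Real.exp (-(γ * u))) := by
      ext u
      simp [hH, Set.indicator_apply, Set.mem_Ioi]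
    rw [h, integral_indicator measurableSet_Ioi]
  rw [step1, step2, hGind, hHind, integral_log_rpow_exp hα hγ,
    Real.integral_rpow_mul_exp_neg_mul_Ioi hβ hγ, hlog, hC]
  rw [Real.rpow_add hγ, show ((1:ℝ)/γ) ^ β = (γ ^ β)⁻¹ by rw [one_div, Real.inv_rpow hγ.le]]
  field_simp
end

section
/- Let α, β, γ > 0 and let f be the McKay bivariate gamma density with parameters α, β, γ. Then ∫_{ℝ²} log(y − x) · f(x, y) d(x, y) = ψ(β) − log γ, where ψ(t) denotes the derivative at t of the function s ↦ log Γ(s). -/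
open MeasureTheory

section Aux
open Set Real Filter Asymptotics Topology

/-- Integrability of the log-weighted Gamma integrand. -/
lemma mcKayAux_integrable_log_gamma {β : ℝ} (hβ : 0 < β) :
    IntegrableOn (fun t : ℝ => t ^ (β - 1) * (Real.log t * Real.exp (-t))) (Ioi 0) := by
  have hexp_top : (fun t : ℝ => Real.exp (-t)) =O[atTop] (· ^ (-(β + 2))) := by
    simpa only [neg_one_mul] using (isLittleO_exp_neg_mul_rpow_atTop zero_lt_one _).isBigO
  have hexp_bot : (fun t : ℝ => Real.exp (-t)) =O[𝓝[>] 0] (· ^ (-(0:ℝ))) := by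
    simp_rw [neg_zero, rpow_zero]
    refine isBigO_const_of_tendsto (?_ : Tendsto _ _ (𝓝 (Real.exp (-0)))) (by norm_num)
    exact (Real.continuous_exp.comp continuous_neg).continuousWithinAt
  have hlog_top := isBigO_rpow_top_log_smul (show β + 1 < β + 2 by linarith) hexp_top
  have hlog_bot := isBigO_rpow_zero_log_smul (show (0:ℝ) < β / 2 by linarith) hexp_bot
  have hloc : LocallyIntegrableOn (fun t : ℝ => Real.log t • Real.exp (-t)) (Ioi 0) := by
    refine ContinuousOn.locallyIntegrableOn ?_ measurableSet_Ioi
    exact (Real.continuousOn_log.mono (by intro x hx; exact ne_of_gt hx)).smul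
      (Real.continuous_exp.comp continuous_neg).continuousOn
  have := mellin_convergent_of_isBigO_scalar hloc hlog_top
      (show β < β + 1 by linarith) hlog_bot (show β / 2 < β by linarith)
  simpa [smul_eq_mul] using this

/-- The derivative of the real Gamma function as an integral. -/
lemma mcKayAux_hasDerivAt_Gamma {β : ℝ} (hβ : 0 < β) :
    HasDerivAt Real.Gamma (∫ t in Ioi (0:ℝ), t ^ (β - 1) * (Real.log t * Real.exp (-t))) β := by
  set G' : ℝ := ∫ t in Ioi (0:ℝ), t ^ (β - 1) * (Real.log t * Real.exp (-t)) with hG'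
  have h1 := Complex.hasDerivAt_GammaIntegral (s := (β : ℂ)) (by simpa using hβ)
  have hval : (∫ t : ℝ in Ioi 0, (t : ℂ) ^ ((β : ℂ) - 1) * (Real.log t * Real.exp (-t)))
      = (G' : ℂ) := by
    rw [hG', show ((∫ t in Ioi (0:ℝ), t ^ (β - 1) * (Real.log t * Real.exp (-t)) : ℝ) : ℂ)
        = ∫ t in Ioi (0:ℝ), ((t ^ (β - 1) * (Real.log t * Real.exp (-t)) : ℝ) : ℂ)
      from (integral_ofReal (𝕜 := ℂ)).symm]
    refine setIntegral_congr_fun measurableSet_Ioi fun t ht => ?_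
    rw [show ((β : ℂ) - 1) = ((β - 1 : ℝ) : ℂ) by push_cast; ring,
      ← Complex.ofReal_cpow ht.le]
    push_cast
    ring
  rw [hval] at h1
  have hml : Complex.Gamma =ᶠ[𝓝 (β : ℂ)] Complex.GammaIntegral := by
    have hop : IsOpen {z : ℂ | 0 < z.re} := isOpen_lt continuous_const Complex.continuous_re
    filter_upwards [hop.mem_nhds (by simpa using hβ)] with z hz
      using Complex.Gamma_eq_integral hz
  have h2 : HasDerivAt Complex.Gamma ((G' : ℝ) : ℂ) (β : ℂ) := h1.congr_of_eventuallyEq hml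
  have h3 := h2.real_of_complex
  simpa [Complex.Gamma_ofReal] using h3

end Aux

/-- The mean of `log (Y - X)` under the McKay bivariate gamma law:
`∫ log(y-x)·f(x,y) d(x,y) = ψ(β) - log γ`, where `ψ` is the derivative of `log ∘ Γ`. -/
theorem mcKay_integral_log_y_sub_x (α β γ : ℝ) (hα : 0 < α) (hβ : 0 < β) (hγ : 0 < γ) :
    ∫ p : ℝ × ℝ, Real.log (p.2 - p.1) * mcKayPdf α β γ p.1 p.2
      = deriv (fun s : ℝ => Real.log (Real.Gamma s)) β - Real.log γ := by
  classical
  set G' : ℝ := ∫ t in Set.Ioi (0:ℝ), t ^ (β - 1) * (Real.log t * Real.exp (-t)) with hG'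
  have hΓα : 0 < Real.Gamma α := Real.Gamma_pos_of_pos hα
  have hΓβ : 0 < Real.Gamma β := Real.Gamma_pos_of_pos hβ
  -- RHS : deriv (log ∘ Γ) β = G' / Γ β
  have hRHS : deriv (fun s : ℝ => Real.log (Real.Gamma s)) β = G' / Real.Gamma β :=
    ((mcKayAux_hasDerivAt_Gamma hβ).log hΓβ.ne').deriv
  set C : ℝ := γ ^ (α + β) / (Real.Gamma α * Real.Gamma β) with hC
  set g : ℝ → ℝ := fun x => if 0 < x then x ^ (α - 1) * Real.exp (-(γ * x)) else 0 with hg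
  set h : ℝ → ℝ := fun v =>
    if 0 < v then Real.log v * (v ^ (β - 1) * Real.exp (-(γ * v))) else 0 with hh
  -- change of variables (x, v) ↦ (x, x + v)
  have hT : MeasurePreserving (fun z : ℝ × ℝ => (z.1, z.1 + z.2))
      ((volume : Measure ℝ).prod volume) ((volume : Measure ℝ).prod volume) :=
    measurePreserving_prod_add volume volume
  have hTe : MeasurableEmbedding (fun z : ℝ × ℝ => (z.1, z.1 + z.2)) :=
    (MeasurableEquiv.shearAddRight ℝ).measurableEmbedding
  have key : (∫ p : ℝ × ℝ, Real.log (p.2 - p.1) * mcKayPdf α β γ p.1 p.2)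
      = ∫ p : ℝ × ℝ, (C * g p.1) * h p.2 := by
    rw [Measure.volume_eq_prod, ← hT.integral_comp hTe
      (fun p : ℝ × ℝ => Real.log (p.2 - p.1) * mcKayPdf α β γ p.1 p.2)]
    refine integral_congr_ae (Filter.Eventually.of_forall fun p => ?_)
    obtain ⟨x, v⟩ := p
    simp only [mcKayPdf, hg, hh]
    by_cases hx : 0 < x <;> by_cases hv : 0 < v
    · rw [if_pos ⟨hx, by linarith⟩, if_pos hx, if_pos hv]
      have h1 : x + v - x = v := by ring
      have h2 : Real.exp (-(γ * (x + v))) = Real.exp (-(γ * x)) * Real.exp (-(γ * v)) := by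
        rw [← Real.exp_add]; ring_nf
      rw [h1, h2]; ring
    · rw [if_neg (by intro hc; exact hv (by linarith [hc.2])), if_neg hv]; ring
    · rw [if_neg (by intro hc; exact hx hc.1), if_pos hv, if_neg hx]; ring
    · rw [if_neg (by intro hc; exact hx hc.1), if_neg hv]; ring
  rw [key, Measure.volume_eq_prod, integral_prod_mul (fun x => C * g x) h, integral_const_mul]
  -- convert the two 1D integrals to `Ioi 0` integrals
  have hind : ∀ f : ℝ → ℝ, (∫ x, if 0 < x then f x else 0) = ∫ x in Set.Ioi 0, f x := by
    intro f
    rw [← integral_indicator measurableSet_Ioi]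
    congr 1
  have hgint : ∫ x, g x = (1 / γ) ^ α * Real.Gamma α := by
    rw [hg, hind, Real.integral_rpow_mul_exp_neg_mul_Ioi hα hγ]
  -- the `h` integral
  have hhint : ∫ v, h v = γ⁻¹ * ((γ ^ (β - 1))⁻¹ * (G' - Real.log γ * Real.Gamma β)) := by
    rw [hh, hind]
    set Φ : ℝ → ℝ := fun t => Real.log (t / γ) * ((t / γ) ^ (β - 1) * Real.exp (-t)) with hΦ
    have step1 : (∫ v in Set.Ioi (0:ℝ), Real.log v * (v ^ (β - 1) * Real.exp (-(γ * v))))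
        = ∫ v in Set.Ioi (0:ℝ), Φ (γ * v) := by
      refine setIntegral_congr_fun measurableSet_Ioi fun v hv => ?_
      simp only [hΦ]
      rw [mul_div_cancel_left₀ v hγ.ne']
    rw [step1, MeasureTheory.integral_comp_mul_left_Ioi Φ 0 hγ, mul_zero, smul_eq_mul]
    congr 1
    have step2 : (∫ t in Set.Ioi (0:ℝ), Φ t)
        = ∫ t in Set.Ioi (0:ℝ), (γ ^ (β - 1))⁻¹ *
            (t ^ (β - 1) * (Real.log t * Real.exp (-t))
              - Real.log γ * (Real.exp (-t) * t ^ (β - 1))) := by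
      refine setIntegral_congr_fun measurableSet_Ioi fun t ht => ?_
      simp only [hΦ]
      rw [Real.log_div (ne_of_gt ht) hγ.ne', Real.div_rpow ht.le hγ.le, div_eq_mul_inv]
      ring
    rw [step2, integral_const_mul,
      integral_sub (mcKayAux_integrable_log_gamma hβ)
        ((Real.GammaIntegral_convergent hβ).const_mul _),
      integral_const_mul, ← Real.Gamma_eq_integral hβ, ← hG']
  rw [hgint, hhint, hRHS]
  -- final algebra
  have e1 : (1 / γ) ^ α = (γ ^ α)⁻¹ := by rw [one_div, Real.inv_rpow hγ.le]
  have e2 : γ ^ (α + β) = γ ^ α * (γ ^ (β - 1) * γ) := by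
    rw [Real.rpow_add hγ]
    congr 1
    calc γ ^ β = γ ^ (β - 1 + 1) := by norm_num
      _ = γ ^ (β - 1) * γ ^ (1:ℝ) := Real.rpow_add hγ _ _
      _ = γ ^ (β - 1) * γ := by rw [Real.rpow_one]
  have hγα : (0:ℝ) < γ ^ α := Real.rpow_pos_of_pos hγ _
  have hγβ1 : (0:ℝ) < γ ^ (β - 1) := Real.rpow_pos_of_pos hγ _
  rw [hC, e1, e2]
  field_simp
end

section
/- Let Z₁, …, Z₉, α, β, γ be real numbers with Z₁ ≠ 0, Z₄ ≠ 0 and (Z₉ − Z₁Z₈)Z₄ + Z₅Z₉ ≠ 0. Suppose the three score equations hold: (i) (α + β)/γ = Z₁ (equivalently γ·Z₁ = α + β with γ ≠ 0), (ii) 1 + Z₂ + Z₃ + (α − 1)·Z₄ − (β − 1)·Z₅ = 0, and (iii) 1 + Z₆ + Z₇ + (β − 1)·Z₈ − γ·Z₉ = 0. Then β = [(1 + Z₂ + Z₃ − Z₄ + Z₅)·Z₉ + (1 + Z₆ + Z₇ − Z₈)·Z₁·Z₄] / [(Z₉ − Z₁·Z₈)·Z₄ + Z₅·Z₉], α = [(β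 − 1)·Z₅ − 1 − Z₂ − Z₃ + Z₄] / Z₄, and γ = (α + β)/Z₁. -/
/-- Algebraic derivation of the closed-form estimators: if the three score equations of the
power-transformed McKay bivariate gamma model hold, expressed in terms of the nine sample
averages `Z₁, …, Z₉`, then `(α, β, γ)` is given by the stated closed-form expressions. -/
theorem closed_form_solution_of_score_equations
    (Z1 Z2 Z3 Z4 Z5 Z6 Z7 Z8 Z9 α β γ : ℝ)
    (hZ1 : Z1 ≠ 0) (hZ4 : Z4 ≠ 0) (hden : (Z9 - Z1 * Z8) * Z4 + Z5 * Z9 ≠ 0)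
    (hγ : γ ≠ 0)
    (h1 : (α + β) / γ = Z1)
    (h2 : 1 + Z2 + Z3 + (α - 1) * Z4 - (β - 1) * Z5 = 0)
    (h3 : 1 + Z6 + Z7 + (β - 1) * Z8 - γ * Z9 = 0) :
    β = ((1 + Z2 + Z3 - Z4 + Z5) * Z9 + (1 + Z6 + Z7 - Z8) * Z1 * Z4)
          / ((Z9 - Z1 * Z8) * Z4 + Z5 * Z9)
      ∧ α = ((β - 1) * Z5 - 1 - Z2 - Z3 + Z4) / Z4
      ∧ γ = (α + β) / Z1 := by
  have h1' : γ * Z1 = α + β := by field_simp at h1; linarith [h1]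
  refine ⟨?_, ?_, ?_⟩
  · rw [eq_div_iff hden]
    linear_combination -Z9*h2 - Z1*Z4*h3 - Z4*Z9*h1'
  · field_simp
    linarith [h2]
  · field_simp
    linarith [h1']
end

section
/- Let n ≥ 1 and let (x₁, y₁), …, (xₙ, yₙ) satisfy 0 < xᵢ < yᵢ for all i; set wᵢ = xᵢ/yᵢ ∈ (0, 1). Let ℓ₁(t) = t/(t + 1) on (0, ∞) and ℓ₂(t) = −log(t)/(1 − log(t)) on (0, 1), and for j = 1, 2 define ϑ_{1,j}(x) = ℓⱼ′(ℓⱼ⁻¹(x))·ℓⱼ⁻¹(x)·log(ℓⱼ⁻¹(x))/x, ϑ_{2,j}(x) = ℓⱼ′(ℓⱼ⁻¹(x))·ℓⱼ⁻¹(x)·log(ℓⱼ⁻¹(x))/(1 − x), ϑ_{3,j}(x) = (ℓⱼ″(ℓⱼ⁻¹(x))/ℓⱼ′(ℓⱼ⁻¹(x)))·ℓⱼ⁻¹(x)·log(ℓⱼ⁻¹(x)), ϑ_{4,j}(x) = (2x − 1)·ℓⱼ′(ℓⱼ⁻¹(x))·ℓⱼ⁻¹(x)·log(ℓⱼ⁻¹(x))/(x(1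 − x)), ϑ_{5,j}(x) = log(ℓⱼ⁻¹(x)), and Ū_{k,j} = (1/n)Σᵢ ϑ_{k,j}(wᵢ). Define α̂ = [((1 + Ū_{3,1} + Ū_{4,1} + Ū_{5,1})/Ū_{2,1})·Ū_{2,2} − 1 − Ū_{3,2} − Ū_{4,2} − Ū_{5,2}] / [Ū_{1,2} − Ū_{1,1}·Ū_{2,2}/Ū_{2,1}] and β̂ = (α̂·Ū_{1,1} + 1 + Ū_{3,1} + Ū_{4,1} + Ū_{5,1})/Ū_{2,1}. Let D = (1/n)Σᵢ wᵢ·log(xᵢ/(yᵢ − xᵢ)) − [(1/n)Σᵢ wᵢ]·[(1/n)Σᵢ log(xᵢ/(yᵢ − xᵢ))]. Provided Ū_{2,1} ≠ 0, D ≠ 0 and the denominator of α̂ is nonzero, it holds that α̂ = [(1/n)Σᵢ wᵢ]/D and β̂ = [1 − (1/n)Σᵢ wᵢ]/D, i.e., the estimators of Nawa and Nadarajah (2023). -/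
open Finset

/-- `ℓ₁(t) = t/(t+1)`. -/
noncomputable def ell1 : ℝ → ℝ := fun t => t / (t + 1)

/-- `ℓ₂(t) = -log(t)/(1 - log(t))`. -/
noncomputable def ell2 : ℝ → ℝ := fun t => -Real.log t / (1 - Real.log t)

/-- `ℓ₁⁻¹(x) = x/(1-x)`. -/
noncomputable def ell1inv : ℝ → ℝ := fun x => x / (1 - x)

/-- `ℓ₂⁻¹(x) = exp(x/(x-1))`. -/
noncomputable def ell2inv : ℝ → ℝ := fun x => Real.exp (x / (x - 1))

/-- The functions `ϑ_k` built from a transformation `ℓ` with inverse `ℓ⁻¹ = linv`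
(`ℓ′`, `ℓ″` are first and second derivatives). -/
noncomputable def vartheta (ℓ linv : ℝ → ℝ) (k : ℕ) (x : ℝ) : ℝ :=
  match k with
  | 1 => (1 / x) * (deriv ℓ (linv x) * linv x * Real.log (linv x))
  | 2 => (1 / (1 - x)) * (deriv ℓ (linv x) * linv x * Real.log (linv x))
  | 3 => deriv (deriv ℓ) (linv x) / deriv ℓ (linv x) * linv x * Real.log (linv x)
  | 4 => (2 * x - 1) * deriv ℓ (linv x) / (x * (1 - x)) * linv x * Real.log (linv x)
  | 5 => Real.log (linv x)
  | _ => 0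



lemma ell2_hasDeriv (t : ℝ) (ht : 0 < t) (hlt : 1 - Real.log t ≠ 0) :
    HasDerivAt ell2 (-(t * (1 - Real.log t) ^ 2)⁻¹) t := by
  have hlog := Real.hasDerivAt_log (ne_of_gt ht)
  have h := (hlog.neg).div (hlog.const_sub 1) hlt
  exact h.congr_deriv (by simp only [Pi.neg_apply]; field_simp; ring)

lemma ell2_deriv (t : ℝ) (ht : 0 < t) (hlt : 1 - Real.log t ≠ 0) :
    deriv ell2 t = -(t * (1 - Real.log t) ^ 2)⁻¹ :=
  (ell2_hasDeriv t ht hlt).deriv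

lemma ell2_deriv2 (t : ℝ) (ht : 0 < t) (ht1 : t < 1) :
    deriv (deriv ell2) t
      = ((1 - Real.log t) ^ 2 - 2 * (1 - Real.log t)) / (t * (1 - Real.log t) ^ 2) ^ 2 := by
  have hlt : ∀ s : ℝ, 0 < s → s < 1 → 1 - Real.log s ≠ 0 := by
    intro s hs hs1
    have := Real.log_neg hs hs1
    nlinarith
  have hev : deriv ell2 =ᶠ[nhds t] fun s => -(s * (1 - Real.log s) ^ 2)⁻¹ := by
    filter_upwards [(isOpen_Ioo (a := (0:ℝ)) (b := 1)).mem_nhds ⟨ht, ht1⟩] with s hs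
      using ell2_deriv s hs.1 (hlt s hs.1 hs.2)
  rw [hev.deriv_eq]
  have hlog := Real.hasDerivAt_log (ne_of_gt ht)
  have hg : HasDerivAt (fun s : ℝ => s * (1 - Real.log s) ^ 2)
      (1 * (1 - Real.log t) ^ 2 + t * (2 * (1 - Real.log t) ^ 1 * -t⁻¹)) t := by
    exact (hasDerivAt_id t).mul ((hlog.const_sub 1).pow 2)
  have hgne : t * (1 - Real.log t) ^ 2 ≠ 0 :=
    mul_ne_zero (ne_of_gt ht) (pow_ne_zero 2 (hlt t ht ht1))
  have h : HasDerivAt (fun s => -(s * (1 - Real.log s) ^ 2)⁻¹) _ t := (hg.inv hgne).neg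
  rw [h.deriv]
  field_simp
  ring



lemma ell1_hasDeriv' (t : ℝ) (ht : t + 1 ≠ 0) :
    HasDerivAt ell1 (((t + 1) ^ 2)⁻¹) t := by
  have h := (hasDerivAt_id t).div ((hasDerivAt_id t).add_const 1) ht
  exact h.congr_deriv (by simp only [id]; field_simp; ring)

lemma ell1_deriv' (t : ℝ) (ht : t + 1 ≠ 0) : deriv ell1 t = ((t + 1) ^ 2)⁻¹ :=
  (ell1_hasDeriv' t ht).deriv

lemma ell1_deriv2' (t : ℝ) (ht : t + 1 ≠ 0) :
    deriv (deriv ell1) t = -2 * ((t + 1) ^ 3)⁻¹ := by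
  have hev : deriv ell1 =ᶠ[nhds t] fun s => ((s + 1) ^ 2)⁻¹ := by
    have hopen : IsOpen {s : ℝ | s + 1 ≠ 0} := by
      have : {s : ℝ | s + 1 ≠ 0} = (fun s : ℝ => s + 1) ⁻¹' {0}ᶜ := rfl
      rw [this]
      exact (isOpen_compl_singleton).preimage (by continuity)
    filter_upwards [hopen.mem_nhds ht] with s hs using ell1_deriv' s hs
  rw [hev.deriv_eq]
  have h : HasDerivAt (fun s : ℝ => ((s + 1) ^ 2)⁻¹)
      (-(2 * (t+1) ^ 1 * 1) / ((t + 1) ^ 2) ^ 2) t :=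
    (((hasDerivAt_id t).add_const 1).pow 2).inv (pow_ne_zero 2 ht)
  rw [h.deriv]
  field_simp

section thetas
variable (v : ℝ) (h0 : 0 < v) (h1 : v < 1)

include h0 h1 in
lemma th11 : vartheta ell1 ell1inv 1 v = (1 - v) * Real.log (v / (1 - v)) := by
  have h1v : (1:ℝ) - v ≠ 0 := sub_ne_zero.mpr h1.ne'
  have ht1 : ell1inv v + 1 = (1 - v)⁻¹ := by unfold ell1inv; field_simp; ring
  have hne : ell1inv v + 1 ≠ 0 := by rw [ht1]; exact inv_ne_zero h1v
  have hd : deriv ell1 (ell1inv v) = (1 - v) ^ 2 := by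
    rw [ell1_deriv' _ hne, ht1]; field_simp
  simp only [vartheta]
  rw [hd]
  simp only [ell1inv]
  field_simp

include h0 h1 in
lemma th21 : vartheta ell1 ell1inv 2 v = v * Real.log (v / (1 - v)) := by
  have h1v : (1:ℝ) - v ≠ 0 := sub_ne_zero.mpr h1.ne'
  have ht1 : ell1inv v + 1 = (1 - v)⁻¹ := by unfold ell1inv; field_simp; ring
  have hne : ell1inv v + 1 ≠ 0 := by rw [ht1]; exact inv_ne_zero h1v
  have hd : deriv ell1 (ell1inv v) = (1 - v) ^ 2 := by
    rw [ell1_deriv' _ hne, ht1]; field_simp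
  simp only [vartheta]
  rw [hd]
  simp only [ell1inv]
  field_simp

include h0 h1 in
lemma th3451 : vartheta ell1 ell1inv 3 v + vartheta ell1 ell1inv 4 v
    + vartheta ell1 ell1inv 5 v = 0 := by
  have h1v : (1:ℝ) - v ≠ 0 := sub_ne_zero.mpr h1.ne'
  have ht1 : ell1inv v + 1 = (1 - v)⁻¹ := by unfold ell1inv; field_simp; ring
  have hne : ell1inv v + 1 ≠ 0 := by rw [ht1]; exact inv_ne_zero h1v
  have hd : deriv ell1 (ell1inv v) = (1 - v) ^ 2 := by
    rw [ell1_deriv' _ hne, ht1]; field_simp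
  have hd2 : deriv (deriv ell1) (ell1inv v) = -2 * (1 - v) ^ 3 := by
    rw [ell1_deriv2' _ hne, ht1]; field_simp
  simp only [vartheta]
  rw [hd, hd2]
  simp only [ell1inv]
  field_simp
  ring

lemma ell2inv_pos : 0 < ell2inv v := Real.exp_pos _

include h0 h1 in
lemma ell2inv_lt_one : ell2inv v < 1 := by
  have hv1 : v - 1 < 0 := by linarith
  have : v / (v - 1) < 0 := div_neg_of_pos_of_neg h0 hv1
  exact Real.exp_lt_one_iff.mpr this

include h0 h1 in
lemma th12 : vartheta ell2 ell2inv 1 v = 1 - v := by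
  have h1v : (1:ℝ) - v ≠ 0 := sub_ne_zero.mpr h1.ne'
  have hv1 : v - 1 ≠ 0 := sub_ne_zero.mpr h1.ne
  have hu : Real.log (ell2inv v) = v / (v - 1) := Real.log_exp _
  have h1u : 1 - Real.log (ell2inv v) = (1 - v)⁻¹ := by rw [hu]; field_simp; ring
  have hne : 1 - Real.log (ell2inv v) ≠ 0 := by rw [h1u]; exact inv_ne_zero h1v
  have h0t : 0 < ell2inv v := Real.exp_pos _
  have hE : ell2inv v ≠ 0 := h0t.ne'
  have hd : deriv ell2 (ell2inv v) = -(ell2inv v * ((1 - v)⁻¹) ^ 2)⁻¹ := by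
    rw [ell2_deriv _ h0t hne, h1u]
  simp only [vartheta]
  rw [hd, hu]
  field_simp
  ring

include h0 h1 in
lemma th22 : vartheta ell2 ell2inv 2 v = v := by
  have h1v : (1:ℝ) - v ≠ 0 := sub_ne_zero.mpr h1.ne'
  have hv1 : v - 1 ≠ 0 := sub_ne_zero.mpr h1.ne
  have hu : Real.log (ell2inv v) = v / (v - 1) := Real.log_exp _
  have h1u : 1 - Real.log (ell2inv v) = (1 - v)⁻¹ := by rw [hu]; field_simp; ring
  have hne : 1 - Real.log (ell2inv v) ≠ 0 := by rw [h1u]; exact inv_ne_zero h1v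
  have h0t : 0 < ell2inv v := Real.exp_pos _
  have hE : ell2inv v ≠ 0 := h0t.ne'
  have hd : deriv ell2 (ell2inv v) = -(ell2inv v * ((1 - v)⁻¹) ^ 2)⁻¹ := by
    rw [ell2_deriv _ h0t hne, h1u]
  simp only [vartheta]
  rw [hd, hu]
  field_simp
  ring

include h0 h1 in
lemma th3452 : vartheta ell2 ell2inv 3 v + vartheta ell2 ell2inv 4 v
    + vartheta ell2 ell2inv 5 v = -1 := by
  have h1v : (1:ℝ) - v ≠ 0 := sub_ne_zero.mpr h1.ne'
  have hv1 : v - 1 ≠ 0 := sub_ne_zero.mpr h1.ne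
  have hu : Real.log (ell2inv v) = v / (v - 1) := Real.log_exp _
  have h1u : 1 - Real.log (ell2inv v) = (1 - v)⁻¹ := by rw [hu]; field_simp; ring
  have hne : 1 - Real.log (ell2inv v) ≠ 0 := by rw [h1u]; exact inv_ne_zero h1v
  have h0t : 0 < ell2inv v := Real.exp_pos _
  have hE : ell2inv v ≠ 0 := h0t.ne'
  have hd : deriv ell2 (ell2inv v) = -(ell2inv v * ((1 - v)⁻¹) ^ 2)⁻¹ := by
    rw [ell2_deriv _ h0t hne, h1u]
  have hd2 : deriv (deriv ell2) (ell2inv v)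
      = (((1 - v)⁻¹) ^ 2 - 2 * (1 - v)⁻¹) / (ell2inv v * ((1 - v)⁻¹) ^ 2) ^ 2 := by
    rw [ell2_deriv2 _ h0t (ell2inv_lt_one v h0 h1), h1u]
  simp only [vartheta]
  rw [hd, hd2, hu]
  field_simp
  ring
end thetas

/-- With `ℓ₁(t) = t/(t+1)` and `ℓ₂(t) = -log(t)/(1-log(t))`, the general closed-form estimators
of the Beta parameters of `X/Y` reduce to the Nawa–Nadarajah (2023) estimators. -/
theorem general_estimators_reduce_to_NawaNadarajah
    (n : ℕ) (hn : 1 ≤ n) (x y : Fin n → ℝ)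
    (hxy : ∀ i, 0 < x i ∧ x i < y i)
    (w : Fin n → ℝ) (hw : ∀ i, w i = x i / y i)
    (U11 U21 U31 U41 U51 U12 U22 U32 U42 U52 : ℝ)
    (hU11 : U11 = (1 / n) * ∑ i, vartheta ell1 ell1inv 1 (w i))
    (hU21 : U21 = (1 / n) * ∑ i, vartheta ell1 ell1inv 2 (w i))
    (hU31 : U31 = (1 / n) * ∑ i, vartheta ell1 ell1inv 3 (w i))
    (hU41 : U41 = (1 / n) * ∑ i, vartheta ell1 ell1inv 4 (w i))
    (hU51 : U51 = (1 / n) * ∑ i, vartheta ell1 ell1inv 5 (w i))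
    (hU12 : U12 = (1 / n) * ∑ i, vartheta ell2 ell2inv 1 (w i))
    (hU22 : U22 = (1 / n) * ∑ i, vartheta ell2 ell2inv 2 (w i))
    (hU32 : U32 = (1 / n) * ∑ i, vartheta ell2 ell2inv 3 (w i))
    (hU42 : U42 = (1 / n) * ∑ i, vartheta ell2 ell2inv 4 (w i))
    (hU52 : U52 = (1 / n) * ∑ i, vartheta ell2 ell2inv 5 (w i))
    (αhat βhat D : ℝ)
    (hαhat : αhat = (((1 + U31 + U41 + U51) / U21) * U22 - 1 - U32 - U42 - U52)
        / (U12 - U11 * U22 / U21))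
    (hβhat : βhat = (αhat * U11 + 1 + U31 + U41 + U51) / U21)
    (hD : D = (1 / n) * ∑ i, w i * Real.log (x i / (y i - x i))
        - ((1 / n) * ∑ i, w i) * ((1 / n) * ∑ i, Real.log (x i / (y i - x i))))
    (hU21ne : U21 ≠ 0) (hDne : D ≠ 0) (hdenne : U12 - U11 * U22 / U21 ≠ 0) :
    αhat = ((1 / n) * ∑ i, w i) / D ∧ βhat = (1 - (1 / n) * ∑ i, w i) / D := by
  have hy : ∀ i, 0 < y i := fun i => (hxy i).1.trans (hxy i).2
  have hw0 : ∀ i, 0 < w i := fun i => by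
    rw [hw i]; exact div_pos (hxy i).1 (hy i)
  have hw1 : ∀ i, w i < 1 := fun i => by
    rw [hw i]; exact (div_lt_one (hy i)).mpr (hxy i).2
  have hLw : ∀ i, w i / (1 - w i) = x i / (y i - x i) := by
    intro i
    have hyne : y i ≠ 0 := (hy i).ne'
    have hyx : y i - x i ≠ 0 := sub_ne_zero.mpr (hxy i).2.ne'
    rw [hw i]
    rw [div_eq_div_iff (by
      have : 1 - x i / y i = (y i - x i) / y i := by field_simp
      rw [this]
      exact div_ne_zero hyx hyne) hyx]
    field_simp
  have nR : (n : ℝ) ≠ 0 := Nat.cast_ne_zero.mpr (by omega)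
  obtain ⟨W, hWdef⟩ : ∃ W : ℝ, (1 / (n:ℝ)) * ∑ i, w i = W := ⟨_, rfl⟩
  obtain ⟨S, hSdef⟩ : ∃ S : ℝ,
      (1 / (n:ℝ)) * ∑ i, w i * Real.log (x i / (y i - x i)) = S := ⟨_, rfl⟩
  obtain ⟨T, hTdef⟩ : ∃ T : ℝ,
      (1 / (n:ℝ)) * ∑ i, Real.log (x i / (y i - x i)) = T := ⟨_, rfl⟩
  rw [hWdef, hSdef, hTdef] at hD
  rw [hWdef]
  have hU21' : U21 = S := by
    rw [hU21, ← hSdef]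
    congr 1
    refine Finset.sum_congr rfl fun i _ => ?_
    rw [th21 _ (hw0 i) (hw1 i), hLw i]
  have hU11' : U11 = T - S := by
    have e : ∑ i, vartheta ell1 ell1inv 1 (w i)
        = ∑ i, (Real.log (x i / (y i - x i)) - w i * Real.log (x i / (y i - x i))) :=
      Finset.sum_congr rfl fun i _ => by
        rw [th11 _ (hw0 i) (hw1 i), hLw i]; ring
    rw [hU11, e, Finset.sum_sub_distrib, ← hTdef, ← hSdef] <;> try skip
    ring
  have e1 : U31 + U41 + U51 = 0 := by
    have : U31 + U41 + U51 = (1 / (n:ℝ)) * ∑ i, (vartheta ell1 ell1inv 3 (w i)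
        + vartheta ell1 ell1inv 4 (w i) + vartheta ell1 ell1inv 5 (w i)) := by
      rw [hU31, hU41, hU51, Finset.sum_add_distrib, Finset.sum_add_distrib]
      ring
    rw [this, Finset.sum_eq_zero fun i _ => th3451 _ (hw0 i) (hw1 i), mul_zero]
  have hU12' : U12 = 1 - W := by
    have e : ∑ i, vartheta ell2 ell2inv 1 (w i) = ∑ i, ((1:ℝ) - w i) :=
      Finset.sum_congr rfl fun i _ => th12 _ (hw0 i) (hw1 i)
    rw [hU12, e, Finset.sum_sub_distrib, Finset.sum_const, Finset.card_univ,
      Fintype.card_fin, nsmul_eq_mul, mul_one, ← hWdef]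
    field_simp
  have hU22' : U22 = W := by
    rw [hU22, ← hWdef]
    congr 1
    exact Finset.sum_congr rfl fun i _ => th22 _ (hw0 i) (hw1 i)
  have e2 : U32 + U42 + U52 = -1 := by
    have : U32 + U42 + U52 = (1 / (n:ℝ)) * ∑ i, (vartheta ell2 ell2inv 3 (w i)
        + vartheta ell2 ell2inv 4 (w i) + vartheta ell2 ell2inv 5 (w i)) := by
      rw [hU32, hU42, hU52, Finset.sum_add_distrib, Finset.sum_add_distrib]
      ring
    rw [this, Finset.sum_congr rfl fun i _ => th3452 _ (hw0 i) (hw1 i),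
      Finset.sum_const, Finset.card_univ, Fintype.card_fin, nsmul_eq_mul]
    field_simp
  rw [hU11', hU12', hU22'] at hαhat hdenne
  rw [hU21'] at hαhat hβhat hdenne hU21ne
  rw [hU11'] at hβhat
  have r1 : 1 + U31 + U41 + U51 = 1 := by linarith
  have r2 : ∀ a : ℝ, a - 1 - U32 - U42 - U52 = a := fun a => by linarith
  rw [r1, r2] at hαhat
  rw [hD] at hDne
  have hα : αhat = W / D := by
    rw [hαhat, hD, div_eq_div_iff hdenne hDne]
    field_simp
    ring
  refine ⟨hα, ?_⟩
  have r3 : αhat * (T - S) + 1 + U31 + U41 + U51 = αhat * (T - S) + 1 := by linarith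
  rw [r3, hα, hD] at hβhat
  rw [hβhat, hD, div_eq_div_iff hU21ne hDne]
  field_simp
  first
  | ring
  | exact Or.inl (by ring)
end

section
/- Let (Ω, 𝓕, ℙ) be a probability space, α, β, γ > 0, and let ((Xᵢ, Yᵢ))_{i≥1} be an i.i.d. sequence of random vectors in ℝ², each distributed according to the McKay bivariate gamma law with parameters α, β, γ. Let h₁, …, h₉ : ℝ² → ℝ be Borel measurable with each hⱼ(X₁, Y₁) integrable; set mⱼ = E[hⱼ(X₁, Y₁)] and Z̄_{j,n} = (1/n)Σ_{i=1}^n hⱼ(Xᵢ, Yᵢ). Define ξ₂(z) = [(1 + z₂ + z₃ − z₄ + z₅)z₉ + (1 + z₆ + z₇ − z₈)z₁z₄]/[(z₉ − z₁z₈)z₄ + z₅z₉], ξ₁(z) = [(ξ₂(z) − 1)z₅ − 1 − z₂ − z₃ + z₄]/z₄, and ξ₃(z) = (ξ₁(z) + ξ₂(z))/z₁ for z ∈ ℝ⁹. Assume m₁ ≠ 0, m₄ ≠ 0, (m₉ − m₁m₈)m₄ + m₅m₉ ≠ 0, and that ξ₁(m) = α, ξ₂(m) = β, ξ₃(m) =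 γ, where m = (m₁, …, m₉). Then, almost surely, the closed-form estimators α̂ₙ = ξ₁(Z̄ₙ), β̂ₙ = ξ₂(Z̄ₙ), γ̂ₙ = ξ₃(Z̄ₙ) converge to α, β, γ respectively as n → ∞ (strong consistency). -/
open MeasureTheory ProbabilityTheory Filter

/-- The McKay bivariate gamma law: the measure on `ℝ²` with density `mcKayPdf α β γ`
w.r.t. two-dimensional Lebesgue measure. -/
noncomputable def mcKayMeasure (α β γ : ℝ) : Measure (ℝ × ℝ) :=
  volume.withDensity fun xy => ENNReal.ofReal (mcKayPdf α β γ xy.1 xy.2)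

/-- `ξ₂(z)`: the closed-form expression for `β` in terms of the nine means `z₁, …, z₉`
(indexed `z 0, …, z 8`). -/
noncomputable def xi2 (z : Fin 9 → ℝ) : ℝ :=
  ((1 + z 1 + z 2 - z 3 + z 4) * z 8 + (1 + z 5 + z 6 - z 7) * z 0 * z 3)
    / ((z 8 - z 0 * z 7) * z 3 + z 4 * z 8)

/-- `ξ₁(z)`: the closed-form expression for `α`. -/
noncomputable def xi1 (z : Fin 9 → ℝ) : ℝ :=
  ((xi2 z - 1) * z 4 - 1 - z 1 - z 2 + z 3) / z 3

/-- `ξ₃(z)`: the closed-form expression for `γ`. -/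
noncomputable def xi3 (z : Fin 9 → ℝ) : ℝ :=
  (xi1 z + xi2 z) / z 0

/-- Strong consistency of the closed-form estimators: for an i.i.d. McKay bivariate gamma
sample, the estimators `ξ₁(Z̄ₙ), ξ₂(Z̄ₙ), ξ₃(Z̄ₙ)` converge almost surely to `(α, β, γ)`. -/
theorem strong_consistency_closed_form_estimators
    {Ω : Type*} [MeasurableSpace Ω] (P : Measure Ω) [IsProbabilityMeasure P]
    (α β γ : ℝ) (hα : 0 < α) (hβ : 0 < β) (hγ : 0 < γ)
    (XY : ℕ → Ω → ℝ × ℝ)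
    (hmeas : ∀ i, Measurable (XY i))
    (hindep : iIndepFun XY P)
    (hdist : ∀ i, Measure.map (XY i) P = mcKayMeasure α β γ)
    (h : Fin 9 → ℝ × ℝ → ℝ) (hhmeas : ∀ j, Measurable (h j))
    (hint : ∀ j, Integrable (fun ω => h j (XY 0 ω)) P)
    (m : Fin 9 → ℝ) (hm : ∀ j, m j = ∫ ω, h j (XY 0 ω) ∂P)
    (Zbar : ℕ → Ω → Fin 9 → ℝ)
    (hZbar : ∀ n ω j, Zbar n ω j = (1 / n : ℝ) * ∑ i ∈ Finset.range n, h j (XY i ω))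
    (hm1 : m 0 ≠ 0) (hm4 : m 3 ≠ 0)
    (hden : (m 8 - m 0 * m 7) * m 3 + m 4 * m 8 ≠ 0)
    (hξ1 : xi1 m = α) (hξ2 : xi2 m = β) (hξ3 : xi3 m = γ) :
    ∀ᵐ ω ∂P,
      Tendsto (fun n => xi1 (Zbar n ω)) atTop (nhds α)
      ∧ Tendsto (fun n => xi2 (Zbar n ω)) atTop (nhds β)
      ∧ Tendsto (fun n => xi3 (Zbar n ω)) atTop (nhds γ) := by
  -- SLLN for each coordinate
  have hslln : ∀ j : Fin 9, ∀ᵐ ω ∂P, Tendsto (fun n => Zbar n ω j) atTop (nhds (m j)) := by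
    intro j
    have hpind : Pairwise (Function.onFun (IndepFun · · P) fun i ω => h j (XY i ω)) := by
      intro i k hik
      exact (hindep.comp (fun _ => h j) (fun _ => hhmeas j)).indepFun hik
    have hid : ∀ i, IdentDistrib (fun ω => h j (XY i ω)) (fun ω => h j (XY 0 ω)) P P := by
      intro i
      have : IdentDistrib (XY i) (XY 0) P P :=
        ⟨(hmeas i).aemeasurable, (hmeas 0).aemeasurable, by rw [hdist i, hdist 0]⟩
      exact this.comp (hhmeas j)
    have := strong_law_ae (μ := P) (fun i ω => h j (XY i ω)) (hint j) hpind hid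
    filter_upwards [this] with ω hω
    have : Tendsto (fun n : ℕ => (n : ℝ)⁻¹ • ∑ i ∈ Finset.range n, h j (XY i ω)) atTop
        (nhds (∫ ω, h j (XY 0 ω) ∂P)) := hω
    rw [← hm j] at this
    convert this using 2 with n
    rw [hZbar]
    simp [smul_eq_mul, div_eq_mul_inv, mul_comm]
  have hall : ∀ᵐ ω ∂P, ∀ j : Fin 9, Tendsto (fun n => Zbar n ω j) atTop (nhds (m j)) :=
    (ae_all_iff).2 hslln
  filter_upwards [hall] with ω hω
  have t2 : Tendsto (fun n => xi2 (Zbar n ω)) atTop (nhds (xi2 m)) := by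
    unfold xi2
    exact Tendsto.div
      ((((((tendsto_const_nhds.add (hω 1)).add (hω 2)).sub (hω 3)).add (hω 4)).mul (hω 8)).add
        (((((tendsto_const_nhds.add (hω 5)).add (hω 6)).sub (hω 7)).mul (hω 0)).mul (hω 3)))
      ((((hω 8).sub ((hω 0).mul (hω 7))).mul (hω 3)).add ((hω 4).mul (hω 8))) hden
  have t1 : Tendsto (fun n => xi1 (Zbar n ω)) atTop (nhds (xi1 m)) := by
    unfold xi1
    exact Tendsto.div
      (((((t2.sub tendsto_const_nhds).mul (hω 4)).sub tendsto_const_nhds).sub (hω 1)).sub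
        (hω 2) |>.add (hω 3)) (hω 3) hm4
  have t3 : Tendsto (fun n => xi3 (Zbar n ω)) atTop (nhds (xi3 m)) := by
    unfold xi3
    exact Tendsto.div (t1.add t2) (hω 0) hm1
  rw [hξ1] at t1; rw [hξ2] at t2; rw [hξ3] at t3
  exact ⟨t1, t2, t3⟩
end
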